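/- Consider a parallel network of n roads with latencies ℓ_i(x,y) = a_i·(x/m_i + y/M_i)^{σ_i} + t_i, where a_i ≥ 0, t_i ≥ 0, σ_i ≥ 1 are integers, and 0 < m_i ≤ M_i for every road i. Let k = max_i M_i/m_i and σ = max_i σ_i, and let ξ(σ) = σ·(σ+1)^{−(σ+1)/σ}. Fix total demand F > 0 and F^h ∈ [0,F]. If (g̃^h, 0) is a Wardrop equilibrium routing (with zero tolls) for human demand F and zero autonomous demand, and (f̃^h, f̃^a) is a Wardrop equilibrium routing (with zero tolls) for human demand F^h and autonomous demand F − F^h, then C(f̃^h, f̃^a) ≤ (k^σ/(1 − ξ(σ)))·C(g̃^h, 0). -/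

import Mathlib

/-- The latency of road `i`: `ℓ_i(x,y) = a_i·(x/m_i + y/M_i)^σ_i + t_i`. -/
noncomputable def ell {n : ℕ} (a t m M : Fin n → ℝ) (σs : Fin n → ℕ)
    (i : Fin n) (x y : ℝ) : ℝ :=
  a i * (x / m i + y / M i) ^ σs i + t i

/-- A routing `(fh, fa)` is feasible for demands `(Fh, Fa)`. -/
def Feasible {n : ℕ} (Fh Fa : ℝ) (fh fa : Fin n → ℝ) : Prop :=
  (∀ i, 0 ≤ fh i) ∧ (∀ i, 0 ≤ fa i) ∧ (∑ i, fh i) = Fh ∧ (∑ i, fa i) = Fa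

/-- The social cost `C(fh,fa) = Σ_i ℓ_i(fh_i,fa_i)·(fh_i + fa_i)`. -/
noncomputable def SocialCost {n : ℕ} (a t m M : Fin n → ℝ) (σs : Fin n → ℕ)
    (fh fa : Fin n → ℝ) : ℝ :=
  ∑ i, ell a t m M σs i (fh i) (fa i) * (fh i + fa i)

/-- Wardrop equilibrium with zero tolls: the routing is feasible and every road carrying
positive flow of a type has latency at most that of every other road. -/
noncomputable def WardropEq {n : ℕ} (a t m M : Fin n → ℝ) (σs : Fin n → ℕ)
    (Fh Fa : ℝ) (fh fa : Fin n → ℝ) : Prop :=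
  Feasible Fh Fa fh fa ∧
  (∀ i j, 0 < fh i →
    ell a t m M σs i (fh i) (fa i) ≤ ell a t m M σs j (fh j) (fa j)) ∧
  (∀ i j, 0 < fa i →
    ell a t m M σs i (fh i) (fa i) ≤ ell a t m M σs j (fh j) (fa j))

/-!
Smoothness argument. Let `f` be the mixed equilibrium and `g` the all-human one. The
variational inequality of `f` gives `C(f) ≤ ∑ ℓᵢ(f)·gᵢ`. On road `i`, Young's inequality
`uᵈ·v ≤ vᵈ⁺¹ + ξ(d)·uᵈ⁺¹` with `u = fʰᵢ/mᵢ + fᵃᵢ/Mᵢ` and `v = gᵢ/mᵢ`, together with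
`mᵢ·u ≤ fʰᵢ + fᵃᵢ` (as `mᵢ ≤ Mᵢ`), yields `ℓᵢ(f)·gᵢ ≤ ℓᵢ(g,0)·gᵢ + ξ(σ)·ℓᵢ(f)·(fʰᵢ + fᵃᵢ)`.
Summing, `C(f) ≤ C(g,0) + ξ(σ)·C(f)`, and `ξ(σ) < 1 ≤ k^σ`.
-/

noncomputable def xi (p : ℝ) : ℝ :=
  p * (p + 1) ^ (-(p + 1) / p)

lemma xi_zero : xi 0 = 0 := zero_mul _

lemma xi_nonneg {p : ℝ} (hp : 0 ≤ p) : 0 ≤ xi p :=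
  mul_nonneg hp (Real.rpow_nonneg (by linarith) _)

lemma xi_eq {p : ℝ} (hp : 0 < p) : xi p = p / (p + 1) * (p + 1) ^ (-(1 / p)) := by
  have hexp : -(p + 1) / p = -1 + -(1 / p) := by field_simp; ring
  rw [xi, hexp, Real.rpow_add (by linarith), Real.rpow_neg_one, div_eq_mul_inv]
  ring

lemma xi_lt_one {p : ℝ} (hp : 0 ≤ p) : xi p < 1 := by
  rcases hp.eq_or_lt with rfl | hp
  · simp [xi_zero]
  rw [xi_eq hp]
  have hfrac : p / (p + 1) < 1 := (div_lt_one (by linarith)).2 (by linarith)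
  have hpow : (p + 1) ^ (-(1 / p)) ≤ 1 :=
    Real.rpow_le_one_of_one_le_of_nonpos (by linarith) (by simp [hp.le])
  calc p / (p + 1) * (p + 1) ^ (-(1 / p)) ≤ p / (p + 1) :=
        mul_le_of_le_one_right (by positivity) hpow
    _ < 1 := hfrac

/-- Bernoulli's inequality `(1 + p)^(q/p) ≥ 1 + q` makes `(1 + p)^(1/p)` decreasing in `p`. -/
lemma xi_monotoneOn : MonotoneOn xi (Set.Ici 0) := by
  intro p (hp : 0 ≤ p) q (hq : 0 ≤ q) hpq
  rcases hp.eq_or_lt with rfl | hp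
  · rw [xi_zero]; exact xi_nonneg hq
  have hq : 0 < q := hp.trans_le hpq
  rw [xi_eq hp, xi_eq hq]
  have hfrac : p / (p + 1) ≤ q / (q + 1) := by
    rw [div_le_div_iff₀ (by linarith) (by linarith)]
    linarith
  have hbernoulli : 1 + q ≤ (1 + p) ^ (q / p) := by
    simpa [div_mul_cancel₀ q hp.ne'] using
      one_add_mul_self_le_rpow_one_add (s := p) (by linarith) ((one_le_div hp).2 hpq)
  have hroot : (q + 1) ^ (1 / q) ≤ (p + 1) ^ (1 / p) :=
    calc (q + 1) ^ (1 / q) ≤ ((1 + p) ^ (q / p)) ^ (1 / q) :=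
          Real.rpow_le_rpow (by linarith) (by linarith) (by positivity)
      _ = (p + 1) ^ (1 / p) := by
          rw [← Real.rpow_mul (by linarith), add_comm]
          congr 1
          field_simp
  have hpow : (p + 1) ^ (-(1 / p)) ≤ (q + 1) ^ (-(1 / q)) := by
    rw [Real.rpow_neg (by linarith), Real.rpow_neg (by linarith)]
    exact inv_anti₀ (by positivity) hroot
  exact mul_le_mul hfrac hpow (by positivity) (by positivity)

/-- Young's inequality with exponents `d + 1` and `(d + 1) / d`, after rescaling `v` by
`(d + 1)^(1/(d + 1))`. -/
lemma pow_mul_le_pow_succ_add_xi_mul (d : ℕ) {u v : ℝ} (hu : 0 ≤ u) (hv : 0 ≤ v) :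
    u ^ d * v ≤ v ^ (d + 1) + xi d * u ^ (d + 1) := by
  rcases Nat.eq_zero_or_pos d with rfl | hd
  · simp [xi_zero]
  set D : ℝ := (d : ℝ) with hDdef
  have hD : 0 < D := Nat.cast_pos.2 hd
  have hD1 : 0 < D + 1 := by linarith
  have hcast : ((d + 1 : ℕ) : ℝ) = D + 1 := by push_cast; rfl
  set c : ℝ := (D + 1) ^ (1 / (D + 1))
  have hc : 0 < c := by positivity
  have hconj : ((D + 1) / D).HolderConjugate (D + 1) :=
    ((Real.holderConjugate_iff_eq_conjExponent (by linarith)).2 (by ring_nf)).symm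
  have hyoung := Real.young_inequality_of_nonneg (div_nonneg (pow_nonneg hu d) hc.le)
    (mul_nonneg hc.le hv) hconj
  have hprod : u ^ d / c * (c * v) = u ^ d * v := by field_simp
  have hfirst : (u ^ d / c) ^ ((D + 1) / D) / ((D + 1) / D) = xi D * u ^ (d + 1) := by
    rw [Real.div_rpow (pow_nonneg hu d) hc.le, ← Real.rpow_natCast, ← Real.rpow_mul hu,
      ← Real.rpow_mul hD1.le, xi_eq hD, ← Real.rpow_natCast u (d + 1), hcast,
      Real.rpow_neg hD1.le, ← hDdef]
    have hexp₁ : D * ((D + 1) / D) = D + 1 := by field_simp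
    have hexp₂ : 1 / (D + 1) * ((D + 1) / D) = 1 / D := by field_simp
    rw [hexp₁, hexp₂]
    field_simp
  have hsecond : (c * v) ^ (D + 1) / (D + 1) = v ^ (d + 1) := by
    rw [Real.mul_rpow hc.le hv, ← Real.rpow_mul hD1.le, ← Real.rpow_natCast v (d + 1), hcast]
    field_simp
    simp
  linarith

lemma sum_mul_le_sum_mul_of_minimal_on_support {ι : Type*} [Fintype ι] {ℓ z g : ι → ℝ}
    (hz : ∀ i, 0 ≤ z i) (hg : ∀ i, 0 ≤ g i) (hsum : ∑ i, z i = ∑ i, g i)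
    (hmin : ∀ i, 0 < z i → ∀ j, ℓ i ≤ ℓ j) :
    ∑ i, ℓ i * z i ≤ ∑ i, ℓ i * g i := by
  by_cases hpos : ∃ i, 0 < z i
  · obtain ⟨i₀, hi₀⟩ := hpos
    have hconst : ∀ i, ℓ i * z i = ℓ i₀ * z i := fun i => by
      rcases (hz i).eq_or_lt with h | h
      · simp [← h]
      · rw [le_antisymm (hmin i h i₀) (hmin i₀ hi₀ i)]
    calc ∑ i, ℓ i * z i = ℓ i₀ * ∑ i, g i := by simp_rw [hconst, ← Finset.mul_sum, hsum]
      _ ≤ ∑ i, ℓ i * g i := by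
          rw [Finset.mul_sum]
          exact Finset.sum_le_sum fun i _ => mul_le_mul_of_nonneg_right (hmin i₀ hi₀ i) (hg i)
  · push Not at hpos
    have hz0 : ∀ i, z i = 0 := fun i => le_antisymm (hpos i) (hz i)
    have hg0 : ∀ i, g i = 0 := fun i =>
      (Finset.sum_eq_zero_iff_of_nonneg fun j _ => hg j).1 (by rw [← hsum]; simp [hz0]) i
        (Finset.mem_univ i)
    simp [hz0, hg0]

section ParallelNetwork

variable {n : ℕ} {a t m M : Fin n → ℝ} {σs : Fin n → ℕ}

lemma ell_nonneg {i : Fin n} {x y : ℝ} (ha : 0 ≤ a i) (ht : 0 ≤ t i) (hm : 0 ≤ m i)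
    (hM : 0 ≤ M i) (hx : 0 ≤ x) (hy : 0 ≤ y) : 0 ≤ ell a t m M σs i x y := by
  unfold ell
  positivity

lemma socialCost_nonneg {fh fa : Fin n → ℝ} (ha : ∀ i, 0 ≤ a i) (ht : ∀ i, 0 ≤ t i)
    (hm : ∀ i, 0 ≤ m i) (hM : ∀ i, 0 ≤ M i) (hfh : ∀ i, 0 ≤ fh i) (hfa : ∀ i, 0 ≤ fa i) :
    0 ≤ SocialCost a t m M σs fh fa :=
  Finset.sum_nonneg fun i _ => mul_nonneg
    (ell_nonneg (ha i) (ht i) (hm i) (hM i) (hfh i) (hfa i)) (add_nonneg (hfh i) (hfa i))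

lemma WardropEq.socialCost_le_sum_ell_mul {Fh Fa : ℝ} {fh fa g : Fin n → ℝ}
    (hf : WardropEq a t m M σs Fh Fa fh fa) (hg : ∀ i, 0 ≤ g i) (hgsum : ∑ i, g i = Fh + Fa) :
    SocialCost a t m M σs fh fa ≤ ∑ i, ell a t m M σs i (fh i) (fa i) * g i := by
  obtain ⟨⟨hfh, hfa, hfhs, hfas⟩, hminh, hmina⟩ := hf
  refine sum_mul_le_sum_mul_of_minimal_on_support (fun i => add_nonneg (hfh i) (hfa i)) hg
    (by rw [Finset.sum_add_distrib, hfhs, hfas, hgsum]) fun i hi j => ?_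
  rcases (hfh i).eq_or_lt with h | h
  · exact hmina i j (by linarith)
  · exact hminh i j h

lemma ell_mul_le_ell_mul_add_xi_mul {i : Fin n} {x y g : ℝ} (ha : 0 ≤ a i) (ht : 0 ≤ t i)
    (hm : 0 < m i) (hmM : m i ≤ M i) (hx : 0 ≤ x) (hy : 0 ≤ y) (hg : 0 ≤ g) :
    ell a t m M σs i x y * g ≤
      ell a t m M σs i g 0 * g + xi (σs i) * (ell a t m M σs i x y * (x + y)) := by
  have hM : 0 < M i := hm.trans_le hmM
  simp only [ell, zero_div, add_zero]
  set u := x / m i + y / M i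
  set v := g / m i
  have hu : 0 ≤ u := by positivity
  have hgv : g = m i * v := (mul_div_cancel₀ g hm.ne').symm
  have hmu : m i * u ≤ x + y := by
    have hy' : m i * (y / M i) ≤ y := by
      calc m i * (y / M i) ≤ M i * (y / M i) := by gcongr
        _ = y := mul_div_cancel₀ y hM.ne'
    simp only [u, mul_add, mul_div_cancel₀ x hm.ne']
    linarith
  have hxi : 0 ≤ xi (σs i) := xi_nonneg (Nat.cast_nonneg _)
  have hsmooth := pow_mul_le_pow_succ_add_xi_mul (σs i) hu (div_nonneg hg hm.le)
  calc (a i * u ^ σs i + t i) * g = a i * m i * (u ^ σs i * v) + t i * g := by rw [hgv]; ring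
    _ ≤ a i * m i * (v ^ (σs i + 1) + xi (σs i) * u ^ (σs i + 1)) + t i * g := by gcongr
    _ = (a i * v ^ σs i + t i) * g + xi (σs i) * (a i * u ^ σs i * (m i * u)) := by
        rw [hgv, pow_succ, pow_succ]; ring
    _ ≤ (a i * v ^ σs i + t i) * g + xi (σs i) * ((a i * u ^ σs i + t i) * (x + y)) := by
        gcongr
        linarith

lemma sum_ell_mul_le_socialCost_add_xi_mul {σ : ℕ} {fh fa g : Fin n → ℝ}
    (ha : ∀ i, 0 ≤ a i) (ht : ∀ i, 0 ≤ t i) (hm : ∀ i, 0 < m i) (hmM : ∀ i, m i ≤ M i)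
    (hσ : ∀ i, σs i ≤ σ) (hfh : ∀ i, 0 ≤ fh i) (hfa : ∀ i, 0 ≤ fa i) (hg : ∀ i, 0 ≤ g i) :
    ∑ i, ell a t m M σs i (fh i) (fa i) * g i ≤
      SocialCost a t m M σs g (fun _ => 0) + xi σ * SocialCost a t m M σs fh fa := by
  simp only [SocialCost, add_zero, Finset.mul_sum, ← Finset.sum_add_distrib]
  refine Finset.sum_le_sum fun i _ => ?_
  have hxi : xi (σs i) ≤ xi σ :=
    xi_monotoneOn (Set.mem_Ici.2 (Nat.cast_nonneg _)) (Set.mem_Ici.2 (Nat.cast_nonneg _))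
      (Nat.cast_le.2 (hσ i))
  have hcost : 0 ≤ ell a t m M σs i (fh i) (fa i) * (fh i + fa i) :=
    mul_nonneg (ell_nonneg (ha i) (ht i) (hm i).le ((hm i).trans_le (hmM i)).le (hfh i) (hfa i))
      (add_nonneg (hfh i) (hfa i))
  calc ell a t m M σs i (fh i) (fa i) * g i
      ≤ ell a t m M σs i (g i) 0 * g i +
          xi (σs i) * (ell a t m M σs i (fh i) (fa i) * (fh i + fa i)) :=
        ell_mul_le_ell_mul_add_xi_mul (ha i) (ht i) (hm i) (hmM i) (hfh i) (hfa i) (hg i)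
    _ ≤ _ := by gcongr

end ParallelNetwork

theorem price_of_autonomy_bound_general
    (n : ℕ) (a t m M : Fin n → ℝ) (σs : Fin n → ℕ)
    (ha : ∀ i, 0 ≤ a i) (ht : ∀ i, 0 ≤ t i)
    (hm : ∀ i, 0 < m i) (hmM : ∀ i, m i ≤ M i)
    (k : ℝ) (hk : IsGreatest (Set.range fun i => M i / m i) k)
    (σ : ℕ) (hσ : IsGreatest (Set.range fun i => σs i) σ)
    (F Fh : ℝ)
    (gh : Fin n → ℝ)
    (hg : WardropEq a t m M σs F 0 gh (fun _ => 0))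
    (fh fa : Fin n → ℝ)
    (hf : WardropEq a t m M σs Fh (F - Fh) fh fa) :
    SocialCost a t m M σs fh fa ≤
      k ^ σ / (1 - (σ : ℝ) * ((σ : ℝ) + 1) ^ (-((σ : ℝ) + 1) / (σ : ℝ))) *
        SocialCost a t m M σs gh (fun _ => 0) := by
  obtain ⟨⟨hgh, -, hghs, -⟩, -, -⟩ := hg
  obtain ⟨hfh, hfa, -, -⟩ := hf.1
  have hM : ∀ i, 0 ≤ M i := fun i => ((hm i).trans_le (hmM i)).le
  have hcost : SocialCost a t m M σs fh fa ≤
      SocialCost a t m M σs gh (fun _ => 0) + xi σ * SocialCost a t m M σs fh fa :=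
    (hf.socialCost_le_sum_ell_mul hgh (by rw [hghs]; ring)).trans
      (sum_ell_mul_le_socialCost_add_xi_mul ha ht hm hmM (fun i => hσ.2 ⟨i, rfl⟩) hfh hfa hgh)
  have hk : 1 ≤ k ^ σ := by
    obtain ⟨j, rfl⟩ := hk.1
    exact one_le_pow₀ ((one_le_div (hm j)).2 (hmM j))
  have hCg : 0 ≤ SocialCost a t m M σs gh (fun _ => 0) :=
    socialCost_nonneg ha ht (fun i => (hm i).le) hM hgh fun _ => le_rfl
  have hxi : xi σ < 1 := xi_lt_one (Nat.cast_nonneg σ)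
  change _ ≤ k ^ σ / (1 - xi σ) * _
  rw [div_mul_eq_mul_div, le_div_iff₀ (by linarith)]
  calc SocialCost a t m M σs fh fa * (1 - xi σ) ≤ SocialCost a t m M σs gh (fun _ => 0) := by
        linarith
    _ ≤ k ^ σ * SocialCost a t m M σs gh (fun _ => 0) := le_mul_of_one_le_left hCg hk

/-- Bounding the Price of Autonomy for heterogeneous networks: if `(g̃ʰ, 0)` is an
equilibrium with all-human demand `F` and `(f̃ʰ, f̃ᵃ)` is an equilibrium with human demand
`Fʰ` and autonomous demand `F − Fʰ`, then
`C(f̃ʰ, f̃ᵃ) ≤ (k^σ / (1 − ξ(σ)))·C(g̃ʰ, 0)`, where `k = max_i M_i/m_i`,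
`σ = max_i σ_i`, and `ξ(σ) = σ(σ+1)^(−(σ+1)/σ)`. -/
theorem price_of_autonomy_bound
    (n : ℕ) (a t m M : Fin n → ℝ) (σs : Fin n → ℕ)
    (ha : ∀ i, 0 ≤ a i) (ht : ∀ i, 0 ≤ t i) (hσs : ∀ i, 1 ≤ σs i)
    (hm : ∀ i, 0 < m i) (hmM : ∀ i, m i ≤ M i)
    (k : ℝ) (hk : IsGreatest (Set.range fun i => M i / m i) k)
    (σ : ℕ) (hσ : IsGreatest (Set.range fun i => σs i) σ)
    (F Fh : ℝ) (hF : 0 < F) (hFh : Fh ∈ Set.Icc 0 F)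
    (gh : Fin n → ℝ)
    (hg : WardropEq a t m M σs F 0 gh (fun _ => 0))
    (fh fa : Fin n → ℝ)
    (hf : WardropEq a t m M σs Fh (F - Fh) fh fa) :
    SocialCost a t m M σs fh fa ≤
      k ^ σ / (1 - (σ : ℝ) * ((σ : ℝ) + 1) ^ (-((σ : ℝ) + 1) / (σ : ℝ))) *
        SocialCost a t m M σs gh (fun _ => 0) :=
  price_of_autonomy_bound_general n a t m M σs ha ht hm hmM k hk σ hσ F Fh gh hg fh fa hf
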